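/- arXiv:2401.11278 — 2 statements merged into one kernel-verified Lean document; each statement's English description precedes it below -/
import Mathlib

section
/- Let Y be integrable, E ∈ {0,1} an enrollment indicator, and M, N positive-integer-valued random variables with M ≤ N and P(E=1 | σ(M,N)) = M/N a.s. (uniform sampling). Define δ as the σ(M,N)-measurable random variable δ = E[Y·E|M,N]/P(E=1|M,N) − E[Y(1−E)|M,N]/P(E=0|M,N) on {M<N} and δ = 0 on {M=N}. Then E[ E[Y·E|M,N]/P(E=1|M,N) ] − E[Y] = E[ ((N−M)/N) · δ ]. -/
/-!
Write `p = M/N` and `A = E[Y·E | M,N]`, `B = E[Y·(1-E) | M,N]`, so that `E[Y | M,N] = A + B`.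
Where `M < N` the identity `A/p - (A + B) = (1 - p) · (A/p - B/(1 - p))` holds pointwise.
On the `σ(M,N)`-measurable event `{M = N}` we have `E[1 - E | M,N] = 1 - p = 0`, so the
nonnegative variable `1 - E` vanishes a.e. there, hence so does `B`, and both sides are `0`.
Integrating `A/p - E[Y | M,N] = ((N - M)/N) · δ` and using `E[E[Y | M,N]] = E[Y]` gives the claim.
-/

open MeasureTheory ProbabilityTheory

section CondExp

variable {Ω : Type*} {m mΩ : MeasurableSpace Ω} {μ : Measure Ω} {f : Ω → ℝ} {s : Set Ω}

lemma ae_eq_zero_on_of_condExp_eq_zero_on (hm : m ≤ mΩ) [SigmaFinite (μ.trim hm)]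
    (hf : Integrable f μ) (hf_nonneg : 0 ≤ᵐ[μ] f) (hs : MeasurableSet[m] s)
    (hcond : ∀ᵐ ω ∂μ, ω ∈ s → μ[f|m] ω = 0) :
    ∀ᵐ ω ∂μ, ω ∈ s → f ω = 0 := by
  have hint : ∫ ω in s, f ω ∂μ = 0 := by
    rw [← setIntegral_condExp hm hf hs]
    exact setIntegral_eq_zero_of_ae_eq_zero hcond
  rw [← ae_restrict_iff' (hm s hs)]
  exact (integral_eq_zero_iff_of_nonneg_ae (ae_restrict_of_ae hf_nonneg) hf.restrict).mp hint

lemma condExp_eq_zero_on_of_eq_zero_on (hf : Integrable f μ) (hs : MeasurableSet[m] s)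
    (h : ∀ᵐ ω ∂μ, ω ∈ s → f ω = 0) :
    ∀ᵐ ω ∂μ, ω ∈ s → μ[f|m] ω = 0 := by
  have hind : s.indicator f =ᵐ[μ] 0 := by
    filter_upwards [h] with ω hω
    by_cases hωs : ω ∈ s
    · simp [hωs, hω hωs]
    · simp [hωs]
  have hcond : s.indicator (μ[f|m]) =ᵐ[μ] 0 :=
    (condExp_indicator hf hs).symm.trans ((condExp_congr_ae hind).trans (by simp))
  filter_upwards [hcond] with ω hω hωs
  rwa [Set.indicator_of_mem hωs] at hω

lemma ae_eq_one_on_of_condExp_eq_one_on [IsFiniteMeasure μ] (hm : m ≤ mΩ)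
    (hf : Integrable f μ) (hf_le : ∀ᵐ ω ∂μ, f ω ≤ 1) (hs : MeasurableSet[m] s)
    (hcond : ∀ᵐ ω ∂μ, ω ∈ s → μ[f|m] ω = 1) :
    ∀ᵐ ω ∂μ, ω ∈ s → f ω = 1 := by
  have hcond_sub : ∀ᵐ ω ∂μ, ω ∈ s → μ[(fun _ => 1) - f|m] ω = 0 := by
    filter_upwards [condExp_sub (m := m) (integrable_const (1 : ℝ)) hf, hcond] with ω h h1 hωs
    rw [h, Pi.sub_apply, condExp_const hm, h1 hωs, sub_self]
  filter_upwards [ae_eq_zero_on_of_condExp_eq_zero_on hm ((integrable_const 1).sub hf)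
    (by filter_upwards [hf_le] with ω hω using sub_nonneg.mpr hω) hs hcond_sub] with ω hω hωs
  exact (sub_eq_zero.mp (hω hωs)).symm

end CondExp

lemma div_sub_add_eq_one_sub_mul (a b : ℝ) {p : ℝ} (hp₀ : p ≠ 0) (hp₁ : p ≠ 1) :
    a / p - (a + b) = (1 - p) * (a / p - b / (1 - p)) := by
  have : 1 - p ≠ 0 := sub_ne_zero.mpr hp₁.symm
  field_simp
  ring

lemma div_sub_add_eq_sub_div_mul_ite (a b : ℝ) {m n : ℕ} (hm : 1 ≤ m) (hmn : m ≤ n)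
    (hb : m = n → b = 0) :
    a / ((m : ℝ) / n) - (a + b) =
      (((n : ℝ) - m) / n) * (if m < n then a / ((m : ℝ) / n) - b / (1 - (m : ℝ) / n) else 0) := by
  have hn : (n : ℝ) ≠ 0 := by exact_mod_cast (Nat.lt_of_lt_of_le hm hmn).ne'
  rcases hmn.lt_or_eq with hlt | rfl
  · have hp₁ : (m : ℝ) / n ≠ 1 := by
      rw [Ne, div_eq_one_iff_eq hn, Nat.cast_inj]
      exact hlt.ne
    rw [if_pos hlt, div_sub_add_eq_one_sub_mul a b (by positivity) hp₁, one_sub_div hn]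
  · simp [hb rfl, div_self hn]

theorem stmt_15_general {Ω : Type*} [mΩ : MeasurableSpace Ω]
    (μ : Measure Ω) [IsProbabilityMeasure μ]
    (Y : Ω → ℝ) (hYint : Integrable Y μ)
    (E : Ω → ℝ) (hEmeas : Measurable E) (hE01 : ∀ ω, E ω = 0 ∨ E ω = 1)
    (M N : Ω → ℕ)
    (hMN : ∀ ω, 1 ≤ M ω ∧ M ω ≤ N ω)
    (mMN : MeasurableSpace Ω)
    (hmMN : mMN = MeasurableSpace.comap (fun ω => (M ω, N ω)) ⊤)
    (hle : mMN ≤ mΩ)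
    (huniform : (μ[E|mMN]) =ᵐ[μ] fun ω => (M ω : ℝ) / (N ω : ℝ))
    (hYEint : Integrable (fun ω => Y ω * E ω) μ)
    (δ : Ω → ℝ)
    (hδ : δ = fun ω => if M ω < N ω then
        (μ[fun ω' => Y ω' * E ω'|mMN]) ω / ((M ω : ℝ) / (N ω : ℝ)) -
          (μ[fun ω' => Y ω' * (1 - E ω')|mMN]) ω / (1 - (M ω : ℝ) / (N ω : ℝ))
      else 0)
    (hint1 : Integrable
      (fun ω => (μ[fun ω' => Y ω' * E ω'|mMN]) ω / ((M ω : ℝ) / (N ω : ℝ))) μ) :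
    ∫ ω, (μ[fun ω' => Y ω' * E ω'|mMN]) ω / ((M ω : ℝ) / (N ω : ℝ)) ∂μ
        - ∫ ω, Y ω ∂μ
      = ∫ ω, (((N ω : ℝ) - (M ω : ℝ)) / (N ω : ℝ)) * δ ω ∂μ := by
  have hEint : Integrable E μ :=
    (integrable_const (1 : ℝ)).mono' hEmeas.aestronglyMeasurable
      (ae_of_all _ fun ω => by rcases hE01 ω with h | h <;> simp [h])
  have hY1Eint : Integrable (fun ω => Y ω * (1 - E ω)) μ := by
    refine (hYint.sub hYEint).congr (ae_of_all _ fun ω => ?_)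
    simp only [Pi.sub_apply]
    ring
  have hS : MeasurableSet[mMN] {ω | M ω = N ω} := hmMN ▸ ⟨{p | p.1 = p.2}, trivial, rfl⟩
  have hE_eq_one : ∀ᵐ ω ∂μ, M ω = N ω → E ω = 1 := by
    refine ae_eq_one_on_of_condExp_eq_one_on hle hEint
      (ae_of_all _ fun ω => by rcases hE01 ω with h | h <;> simp [h]) hS ?_
    filter_upwards [huniform] with ω hu hω
    have hN : (N ω : ℝ) ≠ 0 := Nat.cast_ne_zero.mpr (by have := hMN ω; omega)
    rw [hu, show M ω = N ω from hω, div_self hN]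
  have hB : ∀ᵐ ω ∂μ, M ω = N ω → (μ[fun ω' => Y ω' * (1 - E ω')|mMN]) ω = 0 :=
    condExp_eq_zero_on_of_eq_zero_on hY1Eint hS <| by
      filter_upwards [hE_eq_one] with ω hω hMN using by simp [hω hMN]
  have hadd : μ[Y|mMN] =ᵐ[μ] fun ω =>
      (μ[fun ω' => Y ω' * E ω'|mMN]) ω + (μ[fun ω' => Y ω' * (1 - E ω')|mMN]) ω := by
    have hY : Y = fun ω => Y ω * E ω + Y ω * (1 - E ω) := by funext ω; ring
    conv_lhs => rw [hY]
    exact condExp_add hYEint hY1Eint mMN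
  have hkey : (fun ω => (μ[fun ω' => Y ω' * E ω'|mMN]) ω / ((M ω : ℝ) / (N ω : ℝ)) -
      (μ[Y|mMN]) ω) =ᵐ[μ] fun ω => (((N ω : ℝ) - (M ω : ℝ)) / (N ω : ℝ)) * δ ω := by
    filter_upwards [hadd, hB] with ω hω hBω
    rw [hω, hδ]
    exact div_sub_add_eq_sub_div_mul_ite _ _ (hMN ω).1 (hMN ω).2 hBω
  rw [← integral_congr_ae hkey, integral_sub hint1 integrable_condExp, integral_condExp hle]

/-- Selection-bias decomposition under uniform within-cluster sampling: the
bias of the enrolled-participants mean `E[E[Y|E=1,M,N]]` for the population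
mean `E[Y]` equals the expected product of the non-participation fraction
`(N-M)/N` and the participant/non-participant mean difference `δ`. -/
theorem stmt_15 {Ω : Type*} [mΩ : MeasurableSpace Ω]
    (μ : Measure Ω) [IsProbabilityMeasure μ]
    (Y : Ω → ℝ) (hYmeas : Measurable Y) (hYint : Integrable Y μ)
    (E : Ω → ℝ) (hEmeas : Measurable E) (hE01 : ∀ ω, E ω = 0 ∨ E ω = 1)
    (M N : Ω → ℕ) (hMmeas : Measurable M) (hNmeas : Measurable N)
    (hMN : ∀ ω, 1 ≤ M ω ∧ M ω ≤ N ω)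
    (mMN : MeasurableSpace Ω)
    (hmMN : mMN = MeasurableSpace.comap (fun ω => (M ω, N ω)) ⊤)
    (hle : mMN ≤ mΩ)
    (huniform : (μ[E|mMN]) =ᵐ[μ] fun ω => (M ω : ℝ) / (N ω : ℝ))
    (hYEint : Integrable (fun ω => Y ω * E ω) μ)
    (δ : Ω → ℝ)
    (hδ : δ = fun ω => if M ω < N ω then
        (μ[fun ω' => Y ω' * E ω'|mMN]) ω / ((M ω : ℝ) / (N ω : ℝ)) -
          (μ[fun ω' => Y ω' * (1 - E ω')|mMN]) ω / (1 - (M ω : ℝ) / (N ω : ℝ))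
      else 0)
    (hint1 : Integrable
      (fun ω => (μ[fun ω' => Y ω' * E ω'|mMN]) ω / ((M ω : ℝ) / (N ω : ℝ))) μ)
    (hint2 : Integrable
      (fun ω => (((N ω : ℝ) - (M ω : ℝ)) / (N ω : ℝ)) * δ ω) μ) :
    ∫ ω, (μ[fun ω' => Y ω' * E ω'|mMN]) ω / ((M ω : ℝ) / (N ω : ℝ)) ∂μ
        - ∫ ω, Y ω ∂μ
      = ∫ ω, (((N ω : ℝ) - (M ω : ℝ)) / (N ω : ℝ)) * δ ω ∂μ :=
  stmt_15_general (mΩ := mΩ) μ Y hYint E hEmeas hE01 M N hMN mMN hmMN hle huniform hYEint δ hδ hint1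
end

section
/- Let A ⟂ B where B generates G, P(A=1) = π, and let Y be integrable with finite second moment. Define for a ∈ {0,1} the AIPW-style variable T_a = 1{A=a}(Y − η(a,B))/(π^a(1−π)^{1−a}) + η(a,B) for any bounded measurable η. If η(a,B) = E[Y | A=a, B] a.s. for a ∈ {0,1}, then Var(T_1 − T_0) ≤ Var(T̃_1 − T̃_0) for any other bounded measurable choice η̃ in place of η, where T̃_a is defined analogously. -/
open MeasureTheory ProbabilityTheory

set_option maxHeartbeats 1000000 in
/-- Optimality of the true outcome regression (fully-observed special case of
Proposition 2): among augmented (AIPW-style) influence functions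
`T_a = 1{A=a}(Y - η(a,B))/(π^a(1-π)^(1-a)) + η(a,B)` indexed by a bounded
outcome working model `η`, the choice `η(a,B) = E[Y|A=a,B]` minimizes
`Var(T₁ - T₀)`. -/
theorem stmt_18 {Ω β : Type*} [mΩ : MeasurableSpace Ω] [MeasurableSpace β]
    (μ : Measure Ω) [IsProbabilityMeasure μ]
    (A : Ω → ℝ) (hA : Measurable A) (hA01 : ∀ ω, A ω = 0 ∨ A ω = 1)
    (B : Ω → β) (hB : Measurable B)
    (hAB : IndepFun A B μ)
    (π : ℝ) (hπ0 : 0 < π) (hπ1 : π < 1)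
    (hπ : (μ {ω | A ω = 1}).toReal = π)
    (Y : Ω → ℝ) (hYmeas : Measurable Y) (hY2 : MemLp Y 2 μ)
    (η : ℕ → β → ℝ) (hηmeas : ∀ a, Measurable (η a))
    (hηbdd : ∃ C : ℝ, ∀ a b, |η a b| ≤ C)
    (hηcorrect : (μ[Y|MeasurableSpace.comap A inferInstance ⊔
          MeasurableSpace.comap B inferInstance]) =ᵐ[μ]
        fun ω => if A ω = 1 then η 1 (B ω) else η 0 (B ω)) :
    ∀ ηt : ℕ → β → ℝ, (∀ a, Measurable (ηt a)) →
      (∃ C : ℝ, ∀ a b, |ηt a b| ≤ C) →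
      variance (fun ω =>
          ((if A ω = (1 : ℝ) then 1 else 0) * (Y ω - η 1 (B ω)) / π
            + η 1 (B ω))
          - ((if A ω = (0 : ℝ) then 1 else 0) * (Y ω - η 0 (B ω)) / (1 - π)
            + η 0 (B ω))) μ ≤
      variance (fun ω =>
          ((if A ω = (1 : ℝ) then 1 else 0) * (Y ω - ηt 1 (B ω)) / π
            + ηt 1 (B ω))
          - ((if A ω = (0 : ℝ) then 1 else 0) * (Y ω - ηt 0 (B ω)) / (1 - π)
            + ηt 0 (B ω))) μ := by
  classical
  intro ηt hηtmeas hηtbdd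
  obtain ⟨C₀, hC₀⟩ := hηbdd
  obtain ⟨Ct₀, hCt₀⟩ := hηtbdd
  set C : ℝ := max C₀ 0 with hCdef
  set Ct : ℝ := max Ct₀ 0 with hCtdef
  have hC : ∀ a b, |η a b| ≤ C := fun a b => (hC₀ a b).trans (le_max_left _ _)
  have hCt : ∀ a b, |ηt a b| ≤ Ct := fun a b => (hCt₀ a b).trans (le_max_left _ _)
  have hC0 : 0 ≤ C := le_max_right _ _
  have hCt0 : 0 ≤ Ct := le_max_right _ _
  have hπne : π ≠ 0 := ne_of_gt hπ0
  have h1πpos : (0:ℝ) < 1 - π := by linarith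
  have h1πne : (1:ℝ) - π ≠ 0 := ne_of_gt h1πpos
  have hYint : Integrable Y μ := hY2.integrable one_le_two
  -- indicators
  have hI1meas : Measurable (fun ω => if A ω = (1:ℝ) then (1:ℝ) else 0) :=
    Measurable.ite (hA (measurableSet_singleton (1:ℝ))) measurable_const measurable_const
  have hI0meas : Measurable (fun ω => if A ω = (0:ℝ) then (1:ℝ) else 0) :=
    Measurable.ite (hA (measurableSet_singleton (0:ℝ))) measurable_const measurable_const
  have hI1b : ∀ ω, |(if A ω = (1:ℝ) then (1:ℝ) else 0)| ≤ 1 := by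
    intro ω; by_cases h : A ω = (1:ℝ) <;> simp [h]
  have hI0b : ∀ ω, |(if A ω = (0:ℝ) then (1:ℝ) else 0)| ≤ 1 := by
    intro ω; by_cases h : A ω = (0:ℝ) <;> simp [h]
  -- integrability of bounded functions
  have hbint : ∀ (W : Ω → ℝ) (c : ℝ), Measurable W → (∀ ω, |W ω| ≤ c) → Integrable W μ := by
    intro W c hW hWc
    exact (integrable_const c).mono' hW.aestronglyMeasurable
      (ae_of_all _ fun ω => by simpa [Real.norm_eq_abs] using hWc ω)
  -- expectations of indicators
  have hEI1 : ∫ ω, (if A ω = (1:ℝ) then (1:ℝ) else 0) ∂μ = π := by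
    have h : (fun ω => if A ω = (1:ℝ) then (1:ℝ) else 0) = Set.indicator {ω | A ω = 1} (fun _ => (1:ℝ)) := by
      funext ω; by_cases h : A ω = (1:ℝ) <;> simp [h, Set.indicator_apply]
    rw [h]
    rw [show (Set.indicator {ω | A ω = 1} (fun _ => (1:ℝ))) =
        Set.indicator {ω | A ω = 1} (1 : Ω → ℝ) from rfl]
    rw [integral_indicator_one (show MeasurableSet {ω | A ω = 1} from hA (measurableSet_singleton (1:ℝ)))]
    exact hπ
  have hEI0 : ∫ ω, (if A ω = (0:ℝ) then (1:ℝ) else 0) ∂μ = 1 - π := by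
    have hset : {ω | A ω = (0:ℝ)} = {ω | A ω = 1}ᶜ := by
      ext ω
      rcases hA01 ω with h | h <;> simp [h]
    have h : (fun ω => if A ω = (0:ℝ) then (1:ℝ) else 0) = Set.indicator {ω | A ω = 0} (fun _ => (1:ℝ)) := by
      funext ω; by_cases h : A ω = (0:ℝ) <;> simp [h, Set.indicator_apply]
    rw [h]
    rw [show (Set.indicator {ω | A ω = 0} (fun _ => (1:ℝ))) =
        Set.indicator {ω | A ω = 0} (1 : Ω → ℝ) from rfl]
    rw [integral_indicator_one (show MeasurableSet {ω | A ω = (0:ℝ)} from hA (measurableSet_singleton (0:ℝ)))]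
    rw [hset, measureReal_def, prob_compl_eq_one_sub (show MeasurableSet {ω | A ω = (1:ℝ)} from hA (measurableSet_singleton (1:ℝ)))]
    rw [ENNReal.toReal_sub_of_le prob_le_one ENNReal.one_ne_top]
    simp [hπ]
  -- independence: E[phi(A) h(B)] = E[phi(A)] E[h(B)]
  have hprod : ∀ (φ : ℝ → ℝ), Measurable φ → (∀ x, |φ x| ≤ 2/π + 2/(1-π)) →
      ∀ (h : β → ℝ), Measurable h → (∃ c, ∀ b, |h b| ≤ c) →
      ∫ ω, φ (A ω) * h (B ω) ∂μ = (∫ ω, φ (A ω) ∂μ) * ∫ ω, h (B ω) ∂μ := by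
    intro φ hφ hφb h hh ⟨c, hc⟩
    have h1 : Integrable (fun ω => φ (A ω)) μ := hbint _ _ (hφ.comp hA) fun ω => hφb (A ω)
    have h2 : Integrable (fun ω => h (B ω)) μ := hbint _ _ (hh.comp hB) fun ω => hc (B ω)
    exact (hAB.comp hφ hh).integral_mul_eq_mul_integral h1.1 h2.1
  -- centered A-functionals
  have hφ1meas : Measurable (fun x : ℝ => 1 - (if x = (1:ℝ) then (1:ℝ) else 0) / π) :=
    (measurable_const.sub ((Measurable.ite (measurableSet_singleton (1:ℝ))
      measurable_const measurable_const).div_const π))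
  have hφ0meas : Measurable (fun x : ℝ => 1 - (if x = (0:ℝ) then (1:ℝ) else 0) / (1 - π)) :=
    (measurable_const.sub ((Measurable.ite (measurableSet_singleton (0:ℝ))
      measurable_const measurable_const).div_const (1 - π)))
  have hainv : (1:ℝ) ≤ 1/π := by rw [le_div_iff₀ hπ0]; linarith
  have hbinv : (1:ℝ) ≤ 1/(1-π) := by rw [le_div_iff₀ h1πpos]; linarith
  have h2a : (2:ℝ)/π = 2*(1/π) := by ring
  have h2b : (2:ℝ)/(1-π) = 2*(1/(1-π)) := by ring
  have hdiv1 : (1:ℝ)/π = 1/π := rfl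
  have hφ1b : ∀ x : ℝ, |1 - (if x = (1:ℝ) then (1:ℝ) else 0) / π| ≤ 2/π + 2/(1-π) := by
    intro x
    by_cases h : x = (1:ℝ)
    · rw [h, if_pos rfl, h2a, h2b, abs_le]; constructor <;> linarith
    · rw [if_neg h, zero_div, sub_zero, abs_one, h2a, h2b]; linarith
  have hφ0b : ∀ x : ℝ, |1 - (if x = (0:ℝ) then (1:ℝ) else 0) / (1-π)| ≤ 2/π + 2/(1-π) := by
    intro x
    by_cases h : x = (0:ℝ)
    · rw [h, if_pos rfl, h2a, h2b, abs_le]; constructor <;> linarith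
    · rw [if_neg h, zero_div, sub_zero, abs_one, h2a, h2b]; linarith
  have hEφ1 : ∫ ω, (1 - (if A ω = (1:ℝ) then (1:ℝ) else 0) / π) ∂μ = 0 := by
    rw [integral_sub (integrable_const 1) ((hbint _ _ hI1meas hI1b).div_const π)]
    rw [integral_div, hEI1, integral_const]
    simp [div_self hπne]
  have hEφ0 : ∫ ω, (1 - (if A ω = (0:ℝ) then (1:ℝ) else 0) / (1 - π)) ∂μ = 0 := by
    rw [integral_sub (integrable_const 1) ((hbint _ _ hI0meas hI0b).div_const (1-π))]
    rw [integral_div, hEI0, integral_const]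
    simp [div_self h1πne]
  -- Lemma A : centered-A times h(B) integrates to zero
  have hlemA1 : ∀ (h : β → ℝ), Measurable h → (∃ c, ∀ b, |h b| ≤ c) →
      ∫ ω, h (B ω) * (1 - (if A ω = (1:ℝ) then (1:ℝ) else 0) / π) ∂μ = 0 := by
    intro h hh hhb
    have he : (fun ω => h (B ω) * (1 - (if A ω = (1:ℝ) then (1:ℝ) else 0) / π))
        = fun ω => (fun x : ℝ => 1 - (if x = (1:ℝ) then (1:ℝ) else 0) / π) (A ω) * h (B ω) := by
      funext ω; simp only []; ring
    rw [he, hprod _ hφ1meas hφ1b h hh hhb]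
    have : ∫ ω, (fun x : ℝ => 1 - (if x = (1:ℝ) then (1:ℝ) else 0) / π) (A ω) ∂μ = 0 := hEφ1
    rw [this, zero_mul]
  have hlemA0 : ∀ (h : β → ℝ), Measurable h → (∃ c, ∀ b, |h b| ≤ c) →
      ∫ ω, h (B ω) * (1 - (if A ω = (0:ℝ) then (1:ℝ) else 0) / (1 - π)) ∂μ = 0 := by
    intro h hh hhb
    have he : (fun ω => h (B ω) * (1 - (if A ω = (0:ℝ) then (1:ℝ) else 0) / (1-π)))
        = fun ω => (fun x : ℝ => 1 - (if x = (0:ℝ) then (1:ℝ) else 0) / (1-π)) (A ω) * h (B ω) := by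
      funext ω; simp only []; ring
    rw [he, hprod _ hφ0meas hφ0b h hh hhb]
    have : ∫ ω, (fun x : ℝ => 1 - (if x = (0:ℝ) then (1:ℝ) else 0) / (1-π)) (A ω) ∂μ = 0 := hEφ0
    rw [this, zero_mul]
  -- the sub-σ-algebra generated by (A,B)
  set m := MeasurableSpace.comap A inferInstance ⊔ MeasurableSpace.comap B inferInstance
    with hmdef
  have hm : m ≤ mΩ := sup_le hA.comap_le hB.comap_le
  have hAm : Measurable[m] A := Measurable.of_comap_le le_sup_left
  have hBm : Measurable[m] B := Measurable.of_comap_le le_sup_right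
  -- Lemma B: E[h(B) 1{A=a} (Y - η a (B))] = 0 for the correct η
  have hlemB : ∀ (h : β → ℝ), Measurable h → (∃ c, ∀ b, |h b| ≤ c) → ∀ (r : ℝ) (a : ℕ),
      (∀ ω, (if A ω = r then (1:ℝ) else 0) * (if A ω = (1:ℝ) then η 1 (B ω) else η 0 (B ω))
        = (if A ω = r then (1:ℝ) else 0) * η a (B ω)) →
      Measurable[m] (fun ω => if A ω = r then (1:ℝ) else 0) →
      (∀ ω, |(if A ω = r then (1:ℝ) else 0)| ≤ 1) →
      ∫ ω, (h (B ω) * (if A ω = r then (1:ℝ) else 0)) * (Y ω - η a (B ω)) ∂μ = 0 := by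
    intro h hh ⟨c, hc⟩ r a hsel hIam hIab
    set Ia : Ω → ℝ := fun ω => if A ω = r then (1:ℝ) else 0 with hIadef
    set W : Ω → ℝ := fun ω => h (B ω) * Ia ω with hWdef
    have hWsm : StronglyMeasurable[m] W :=
      ((hh.comp hBm).mul hIam).stronglyMeasurable
    have hWb : ∀ ω, ‖W ω‖ ≤ max c 0 := by
      intro ω
      rw [hWdef, Real.norm_eq_abs, abs_mul]
      calc |h (B ω)| * |Ia ω| ≤ max c 0 * 1 :=
            mul_le_mul ((hc _).trans (le_max_left _ _)) (hIab ω) (abs_nonneg _)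
              (le_max_right _ _)
        _ = max c 0 := mul_one _
    have hWmeas : Measurable[mΩ] W := ((hh.comp hB).mul (hIam.mono hm le_rfl))
    have hpull : μ[W * Y|m] =ᵐ[μ] W * μ[Y|m] :=
      condExp_stronglyMeasurable_mul_of_bound hm hWsm hYint (max c 0) (ae_of_all _ hWb)
    have hint1 : Integrable (W * Y) μ :=
      hYint.bdd_mul hWmeas.aestronglyMeasurable (ae_of_all _ hWb)
    have hint2 : Integrable (fun ω => W ω * η a (B ω)) μ := by
      refine hbint _ (max c 0 * C) (hWmeas.mul ((hηmeas a).comp hB)) fun ω => ?_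
      rw [abs_mul]
      exact mul_le_mul (by simpa [Real.norm_eq_abs] using hWb ω) (hC a (B ω)) (abs_nonneg _)
        (le_max_right c 0)
    have e1 : ∫ ω, (W * Y) ω ∂μ = ∫ ω, (W * μ[Y|m]) ω ∂μ :=
      (integral_condExp hm).symm.trans (integral_congr_ae hpull)
    have e2 : ∫ ω, (W * μ[Y|m]) ω ∂μ
        = ∫ ω, W ω * (if A ω = (1:ℝ) then η 1 (B ω) else η 0 (B ω)) ∂μ := by
      refine integral_congr_ae (hηcorrect.mono fun ω hω => ?_)
      simp only [Pi.mul_apply]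
      rw [hω]
    have e3 : ∫ ω, W ω * (if A ω = (1:ℝ) then η 1 (B ω) else η 0 (B ω)) ∂μ
        = ∫ ω, W ω * η a (B ω) ∂μ := by
      refine integral_congr_ae (ae_of_all _ fun ω => ?_)
      rw [hWdef]
      simp only [mul_assoc]
      rw [hsel ω]
    have hsplit : (fun ω => (h (B ω) * Ia ω) * (Y ω - η a (B ω)))
        = fun ω => (W * Y) ω - W ω * η a (B ω) := by
      funext ω; simp only [Pi.mul_apply, hWdef]; ring
    rw [hsplit, integral_sub hint1 hint2, e1, e2, e3, sub_self]
  -- difference of working models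
  set K : ℝ := Ct + C with hKdef
  have hK0 : (0:ℝ) ≤ K := by rw [hKdef]; linarith
  set f1 : β → ℝ := fun b => ηt 1 b - η 1 b with hf1def
  set f0 : β → ℝ := fun b => ηt 0 b - η 0 b with hf0def
  have habs_sub : ∀ x y : ℝ, |x - y| ≤ |x| + |y| := fun x y => by
    simpa [sub_eq_add_neg, abs_neg] using abs_add_le x (-y)
  have hf1m : Measurable f1 := (hηtmeas 1).sub (hηmeas 1)
  have hf0m : Measurable f0 := (hηtmeas 0).sub (hηmeas 0)
  have hf1b : ∀ b, |f1 b| ≤ K := fun b => (habs_sub _ _).trans (add_le_add (hCt 1 b) (hC 1 b))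
  have hf0b : ∀ b, |f0 b| ≤ K := fun b => (habs_sub _ _).trans (add_le_add (hCt 0 b) (hC 0 b))
  have hlin : ∀ (r s : ℝ) (u v : β → ℝ), (∀ b, |u b| ≤ K) → (∀ b, |v b| ≤ K) →
      ∀ b, |r * u b + s * v b| ≤ |r| * K + |s| * K := by
    intro r s u v hu hv b
    refine (abs_add_le _ _).trans (add_le_add ?_ ?_) <;> rw [abs_mul]
    · exact mul_le_mul_of_nonneg_left (hu b) (abs_nonneg _)
    · exact mul_le_mul_of_nonneg_left (hv b) (abs_nonneg _)
  set h1 : β → ℝ := fun b => ((1/π) * (1 - 1/π)) * f1 b + (-(1/π)) * f0 b with hh1def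
  set h0 : β → ℝ := fun b => (-(1/(1-π))) * f1 b + ((1/(1-π)) * (1 - 1/(1-π))) * f0 b with hh0def
  set k1 : β → ℝ := fun b => (η 1 b - η 0 b) * f1 b with hk1def
  set k0 : β → ℝ := fun b => (η 1 b - η 0 b) * f0 b with hk0def
  have hh1m : Measurable h1 := (hf1m.const_mul _).add (hf0m.const_mul _)
  have hh0m : Measurable h0 := (hf1m.const_mul _).add (hf0m.const_mul _)
  have hk1m : Measurable k1 := ((hηmeas 1).sub (hηmeas 0)).mul hf1m
  have hk0m : Measurable k0 := ((hηmeas 1).sub (hηmeas 0)).mul hf0m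
  have hh1b : ∃ c, ∀ b, |h1 b| ≤ c := ⟨_, hlin _ _ _ _ hf1b hf0b⟩
  have hh0b : ∃ c, ∀ b, |h0 b| ≤ c := ⟨_, hlin _ _ _ _ hf1b hf0b⟩
  have hkb : ∀ (v : β → ℝ), (∀ b, |v b| ≤ K) → ∀ b, |(η 1 b - η 0 b) * v b| ≤ (C + C) * K := by
    intro v hv b
    rw [abs_mul]
    exact mul_le_mul ((habs_sub _ _).trans (add_le_add (hC 1 b) (hC 0 b))) (hv b)
      (abs_nonneg _) (by linarith)
  have hk1b : ∃ c, ∀ b, |k1 b| ≤ c := ⟨_, hkb f1 hf1b⟩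
  have hk0b : ∃ c, ∀ b, |k0 b| ≤ c := ⟨_, hkb f0 hf0b⟩
  -- generic L² membership for AIPW functionals
  have hmem2 : ∀ (ξ : ℕ → β → ℝ), (∀ a, Measurable (ξ a)) → ∀ (Kξ : ℝ), 0 ≤ Kξ →
      (∀ a b, |ξ a b| ≤ Kξ) →
      MemLp (fun ω => ((if A ω = (1 : ℝ) then 1 else 0) * (Y ω - ξ 1 (B ω)) / π + ξ 1 (B ω))
        - ((if A ω = (0 : ℝ) then 1 else 0) * (Y ω - ξ 0 (B ω)) / (1 - π) + ξ 0 (B ω))) 2 μ := by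
    intro ξ hξm Kξ hKξ0 hξb
    have hmeas : Measurable[mΩ] (fun ω =>
        ((if A ω = (1 : ℝ) then 1 else 0) * (Y ω - ξ 1 (B ω)) / π + ξ 1 (B ω))
        - ((if A ω = (0 : ℝ) then 1 else 0) * (Y ω - ξ 0 (B ω)) / (1 - π) + ξ 0 (B ω))) := by
      refine Measurable.sub (Measurable.add (Measurable.div_const (Measurable.mul hI1meas
        (hYmeas.sub ((hξm 1).comp hB))) π) ((hξm 1).comp hB))
        (Measurable.add (Measurable.div_const (Measurable.mul hI0meas
        (hYmeas.sub ((hξm 0).comp hB))) (1-π)) ((hξm 0).comp hB))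
    refine MemLp.of_le_mul (hY2.norm.add (memLp_const 1)) hmeas.aestronglyMeasurable
      (c := (1 + Kξ) * (1/π + 1/(1-π) + 2)) (ae_of_all _ fun ω => ?_)
    have hq0 : (0:ℝ) ≤ |Y ω| := abs_nonneg _
    simp only [Pi.add_apply, Real.norm_eq_abs]
    rw [abs_of_nonneg (show (0:ℝ) ≤ |Y ω| + 1 by positivity)]
    have hb1 : |ξ 1 (B ω)| ≤ Kξ := hξb 1 (B ω)
    have hb0 : |ξ 0 (B ω)| ≤ Kξ := hξb 0 (B ω)
    have hYb1 : |Y ω - ξ 1 (B ω)| ≤ |Y ω| + Kξ := (habs_sub _ _).trans (by linarith)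
    have hYb0 : |Y ω - ξ 0 (B ω)| ≤ |Y ω| + Kξ := (habs_sub _ _).trans (by linarith)
    have hkey : ∀ i1 i0 : ℝ, (1:ℝ) ≤ i1 → (1:ℝ) ≤ i0 →
        Kξ + ((|Y ω| + Kξ) * i0 + Kξ) ≤ (1 + Kξ) * (i1 + i0 + 2) * (|Y ω| + 1) := by
      intro i1 i0 hi1 hi0
      nlinarith [mul_le_mul_of_nonneg_right
          (show |Y ω| + Kξ ≤ (1 + Kξ) * (|Y ω| + 1) by nlinarith) (by linarith : (0:ℝ) ≤ i0),
        mul_nonneg (mul_nonneg (by linarith : (0:ℝ) ≤ 1 + Kξ)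
          (by linarith : (0:ℝ) ≤ |Y ω| + 1)) (by linarith : (0:ℝ) ≤ i1),
        mul_le_mul_of_nonneg_left (show (1:ℝ) ≤ |Y ω| + 1 by linarith)
          (by linarith : (0:ℝ) ≤ 1 + Kξ)]
    rcases hA01 ω with h | h
    · rw [h, if_neg (by norm_num), if_pos rfl]
      have hstep : |(0 * (Y ω - ξ 1 (B ω)) / π + ξ 1 (B ω))
          - (1 * (Y ω - ξ 0 (B ω)) / (1 - π) + ξ 0 (B ω))|
          ≤ Kξ + ((|Y ω| + Kξ) * (1/(1-π)) + Kξ) := by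
        refine (habs_sub _ _).trans (add_le_add ?_ ?_)
        · simpa using hb1
        · rw [one_mul]
          refine (abs_add_le _ _).trans (add_le_add ?_ hb0)
          rw [abs_div, abs_of_pos h1πpos, div_eq_mul_inv, one_div]
          exact mul_le_mul_of_nonneg_right hYb0 (by positivity)
      exact hstep.trans (hkey (1/π) (1/(1-π)) hainv hbinv)
    · rw [h, if_pos rfl, if_neg (by norm_num)]
      have hstep : |(1 * (Y ω - ξ 1 (B ω)) / π + ξ 1 (B ω))
          - (0 * (Y ω - ξ 0 (B ω)) / (1 - π) + ξ 0 (B ω))|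
          ≤ Kξ + ((|Y ω| + Kξ) * (1/π) + Kξ) := by
        have hre : ∀ x y z w : ℝ, x - y = -(y - x) := fun x y z w => by ring
        have : |(1 * (Y ω - ξ 1 (B ω)) / π + ξ 1 (B ω))
            - (0 * (Y ω - ξ 0 (B ω)) / (1 - π) + ξ 0 (B ω))|
            = |(0 * (Y ω - ξ 0 (B ω)) / (1 - π) + ξ 0 (B ω))
            - (1 * (Y ω - ξ 1 (B ω)) / π + ξ 1 (B ω))| := by rw [abs_sub_comm]
        rw [this]
        refine (habs_sub _ _).trans (add_le_add ?_ ?_)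
        · simpa using hb0
        · rw [one_mul]
          refine (abs_add_le _ _).trans (add_le_add ?_ hb1)
          rw [abs_div, abs_of_pos hπ0, div_eq_mul_inv, one_div]
          exact mul_le_mul_of_nonneg_right hYb1 (by positivity)
      refine hstep.trans ?_
      have := hkey (1/(1-π)) (1/π) hbinv hainv
      nlinarith [this]
  -- the two influence functions
  set T : Ω → ℝ := fun ω =>
      ((if A ω = (1 : ℝ) then 1 else 0) * (Y ω - η 1 (B ω)) / π + η 1 (B ω))
      - ((if A ω = (0 : ℝ) then 1 else 0) * (Y ω - η 0 (B ω)) / (1 - π) + η 0 (B ω))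
    with hTdef
  set Tt : Ω → ℝ := fun ω =>
      ((if A ω = (1 : ℝ) then 1 else 0) * (Y ω - ηt 1 (B ω)) / π + ηt 1 (B ω))
      - ((if A ω = (0 : ℝ) then 1 else 0) * (Y ω - ηt 0 (B ω)) / (1 - π) + ηt 0 (B ω))
    with hTtdef
  set D : Ω → ℝ := fun ω => Tt ω - T ω with hDdef
  have hT2 : MemLp T 2 μ := by rw [hTdef]; exact hmem2 η hηmeas C hC0 hC
  have hTt2 : MemLp Tt 2 μ := by rw [hTtdef]; exact hmem2 ηt hηtmeas Ct hCt0 hCt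
  have hD2 : MemLp D 2 μ := by rw [hDdef]; exact hTt2.sub hT2
  have hTint : Integrable T μ := hT2.integrable one_le_two
  have hTtint : Integrable Tt μ := hTt2.integrable one_le_two
  have hDint : Integrable D μ := hD2.integrable one_le_two
  have hTsq : Integrable (fun ω => T ω ^ 2) μ := hT2.integrable_sq
  have hDsq : Integrable (fun ω => D ω ^ 2) μ := hD2.integrable_sq
  -- pointwise identity for D
  have hDeq : ∀ ω, D ω = f1 (B ω) * (1 - (if A ω = (1:ℝ) then (1:ℝ) else 0) / π)
      - f0 (B ω) * (1 - (if A ω = (0:ℝ) then (1:ℝ) else 0) / (1 - π)) := by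
    intro ω
    simp only [hDdef, hTdef, hTtdef, hf1def, hf0def]
    rcases hA01 ω with h | h <;> rw [h] <;> norm_num <;> ring
  have hDb : ∀ ω, |D ω| ≤ K * (2/π + 2/(1-π)) + K * (2/π + 2/(1-π)) := by
    intro ω
    rw [hDeq ω]
    refine (habs_sub _ _).trans (add_le_add ?_ ?_) <;> rw [abs_mul]
    · exact mul_le_mul (hf1b _) (hφ1b (A ω)) (abs_nonneg _) hK0
    · exact mul_le_mul (hf0b _) (hφ0b (A ω)) (abs_nonneg _) hK0
  have hTD : Integrable (fun ω => T ω * D ω) μ := by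
    have h2 := hTint.bdd_mul hD2.aestronglyMeasurable
      (ae_of_all _ fun ω => by simpa [Real.norm_eq_abs] using hDb ω)
    simpa [mul_comm] using h2
  -- integrability of centered pieces
  have huint : ∀ (v : β → ℝ), Measurable v → ∀ c, (∀ b, |v b| ≤ c) →
      Integrable (fun ω => v (B ω) * (1 - (if A ω = (1:ℝ) then (1:ℝ) else 0) / π)) μ ∧
      Integrable (fun ω => v (B ω) * (1 - (if A ω = (0:ℝ) then (1:ℝ) else 0) / (1-π))) μ := by
    intro v hv c hc
    have hc0 : ∀ b, |v b| ≤ max c 0 := fun b => (hc b).trans (le_max_left _ _)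
    constructor
    · refine hbint _ (max c 0 * (2/π + 2/(1-π)))
        ((hv.comp hB).mul (measurable_const.sub (hI1meas.div_const π))) fun ω => ?_
      rw [abs_mul]
      exact mul_le_mul (hc0 _) (hφ1b (A ω)) (abs_nonneg _) (le_max_right _ _)
    · refine hbint _ (max c 0 * (2/π + 2/(1-π)))
        ((hv.comp hB).mul (measurable_const.sub (hI0meas.div_const (1-π)))) fun ω => ?_
      rw [abs_mul]
      exact mul_le_mul (hc0 _) (hφ0b (A ω)) (abs_nonneg _) (le_max_right _ _)
  -- E[D] = 0
  have hED : ∫ ω, D ω ∂μ = 0 := by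
    calc ∫ ω, D ω ∂μ
        = ∫ ω, (f1 (B ω) * (1 - (if A ω = (1:ℝ) then (1:ℝ) else 0) / π)
            - f0 (B ω) * (1 - (if A ω = (0:ℝ) then (1:ℝ) else 0) / (1 - π))) ∂μ :=
          integral_congr_ae (ae_of_all _ hDeq)
      _ = (∫ ω, f1 (B ω) * (1 - (if A ω = (1:ℝ) then (1:ℝ) else 0) / π) ∂μ)
          - ∫ ω, f0 (B ω) * (1 - (if A ω = (0:ℝ) then (1:ℝ) else 0) / (1 - π)) ∂μ :=
          integral_sub (huint f1 hf1m K hf1b).1 (huint f0 hf0m K hf0b).2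
      _ = 0 := by
          rw [hlemA1 f1 hf1m ⟨K, hf1b⟩, hlemA0 f0 hf0m ⟨K, hf0b⟩, sub_zero]
  -- pointwise identity for T * D
  have hTDeq : ∀ ω, T ω * D ω =
      (h1 (B ω) * (if A ω = (1:ℝ) then (1:ℝ) else 0)) * (Y ω - η 1 (B ω))
      + (h0 (B ω) * (if A ω = (0:ℝ) then (1:ℝ) else 0)) * (Y ω - η 0 (B ω))
      + (k1 (B ω) * (1 - (if A ω = (1:ℝ) then (1:ℝ) else 0) / π)
        - k0 (B ω) * (1 - (if A ω = (0:ℝ) then (1:ℝ) else 0) / (1 - π))) := by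
    intro ω
    simp only [hDdef, hTdef, hTtdef, hf1def, hf0def, hh1def, hh0def, hk1def, hk0def]
    rcases hA01 ω with h | h <;> rw [h] <;> norm_num <;> ring
  have hY1int : Integrable (fun ω => Y ω - η 1 (B ω)) μ :=
    hYint.sub (hbint _ C ((hηmeas 1).comp hB) fun ω => hC 1 (B ω))
  have hY0int : Integrable (fun ω => Y ω - η 0 (B ω)) μ :=
    hYint.sub (hbint _ C ((hηmeas 0).comp hB) fun ω => hC 0 (B ω))
  have htint : ∀ (v : β → ℝ), Measurable v → (∃ c, ∀ b, |v b| ≤ c) → ∀ (r : ℝ),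
      Measurable[mΩ] (fun ω => if A ω = r then (1:ℝ) else 0) →
      (∀ ω, |(if A ω = r then (1:ℝ) else 0)| ≤ 1) →
      ∀ (Z : Ω → ℝ), Integrable Z μ →
      Integrable (fun ω => (v (B ω) * (if A ω = r then (1:ℝ) else 0)) * Z ω) μ := by
    intro v hv ⟨c, hc⟩ r hIm hIb Z hZ
    refine hZ.bdd_mul (c := max c 0) ((hv.comp hB).mul hIm).aestronglyMeasurable
      (ae_of_all _ fun ω => ?_)
    rw [Real.norm_eq_abs, abs_mul]
    calc |v (B ω)| * |(if A ω = r then (1:ℝ) else 0)| ≤ max c 0 * 1 :=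
          mul_le_mul ((hc _).trans (le_max_left _ _)) (hIb ω) (abs_nonneg _) (le_max_right _ _)
      _ = max c 0 := mul_one _
  have ht1int := htint h1 hh1m hh1b 1 hI1meas hI1b _ hY1int
  have ht0int := htint h0 hh0m hh0b 0 hI0meas hI0b _ hY0int
  have hs1int := (huint k1 hk1m _ (hkb f1 hf1b)).1
  have hs0int := (huint k0 hk0m _ (hkb f0 hf0b)).2
  -- E[T D] = 0
  have hETD : ∫ ω, T ω * D ω ∂μ = 0 := by
    have hsel1 : ∀ ω, (if A ω = (1:ℝ) then (1:ℝ) else 0)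
        * (if A ω = (1:ℝ) then η 1 (B ω) else η 0 (B ω))
        = (if A ω = (1:ℝ) then (1:ℝ) else 0) * η 1 (B ω) := by
      intro ω; by_cases h : A ω = (1:ℝ) <;> simp [h]
    have hsel0 : ∀ ω, (if A ω = (0:ℝ) then (1:ℝ) else 0)
        * (if A ω = (1:ℝ) then η 1 (B ω) else η 0 (B ω))
        = (if A ω = (0:ℝ) then (1:ℝ) else 0) * η 0 (B ω) := by
      intro ω
      by_cases h : A ω = (0:ℝ)
      · rw [h]; norm_num
      · simp [h]
    have hI1m' : Measurable[m] (fun ω => if A ω = (1:ℝ) then (1:ℝ) else 0) :=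
      Measurable.ite (hAm (measurableSet_singleton (1:ℝ))) measurable_const measurable_const
    have hI0m' : Measurable[m] (fun ω => if A ω = (0:ℝ) then (1:ℝ) else 0) :=
      Measurable.ite (hAm (measurableSet_singleton (0:ℝ))) measurable_const measurable_const
    calc ∫ ω, T ω * D ω ∂μ
        = ∫ ω, ((h1 (B ω) * (if A ω = (1:ℝ) then (1:ℝ) else 0)) * (Y ω - η 1 (B ω))
          + (h0 (B ω) * (if A ω = (0:ℝ) then (1:ℝ) else 0)) * (Y ω - η 0 (B ω))
          + (k1 (B ω) * (1 - (if A ω = (1:ℝ) then (1:ℝ) else 0) / π)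
            - k0 (B ω) * (1 - (if A ω = (0:ℝ) then (1:ℝ) else 0) / (1 - π)))) ∂μ :=
          integral_congr_ae (ae_of_all _ hTDeq)
      _ = (∫ ω, (h1 (B ω) * (if A ω = (1:ℝ) then (1:ℝ) else 0)) * (Y ω - η 1 (B ω)) ∂μ)
          + (∫ ω, (h0 (B ω) * (if A ω = (0:ℝ) then (1:ℝ) else 0)) * (Y ω - η 0 (B ω)) ∂μ)
          + ((∫ ω, k1 (B ω) * (1 - (if A ω = (1:ℝ) then (1:ℝ) else 0) / π) ∂μ)
            - ∫ ω, k0 (B ω) * (1 - (if A ω = (0:ℝ) then (1:ℝ) else 0) / (1 - π)) ∂μ) := by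
          have hadd1 : Integrable (fun ω =>
              (h1 (B ω) * (if A ω = (1:ℝ) then (1:ℝ) else 0)) * (Y ω - η 1 (B ω))
              + (h0 (B ω) * (if A ω = (0:ℝ) then (1:ℝ) else 0)) * (Y ω - η 0 (B ω))) μ :=
            ht1int.add ht0int
          have hsub1 : Integrable (fun ω =>
              k1 (B ω) * (1 - (if A ω = (1:ℝ) then (1:ℝ) else 0) / π)
              - k0 (B ω) * (1 - (if A ω = (0:ℝ) then (1:ℝ) else 0) / (1 - π))) μ :=
            hs1int.sub hs0int
          rw [integral_add hadd1 hsub1,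
            integral_add ht1int ht0int, integral_sub hs1int hs0int]
      _ = 0 := by
          rw [hlemB h1 hh1m hh1b 1 1 hsel1 hI1m' hI1b,
            hlemB h0 hh0m hh0b 0 0 hsel0 hI0m' hI0b,
            hlemA1 k1 hk1m hk1b, hlemA0 k0 hk0m hk0b]
          ring
  -- variance comparison
  have eTt1 : ∫ ω, Tt ω ∂μ = ∫ ω, T ω ∂μ := by
    have h : ∀ ω, Tt ω = T ω + D ω := fun ω => by simp only [hDdef]; ring
    rw [integral_congr_ae (ae_of_all _ h), integral_add hTint hDint, hED, add_zero]
  have eTt2 : ∫ ω, Tt ω ^ 2 ∂μ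
      = ∫ ω, T ω ^ 2 ∂μ + (2 * ∫ ω, T ω * D ω ∂μ + ∫ ω, D ω ^ 2 ∂μ) := by
    have h : ∀ ω, Tt ω ^ 2 = T ω ^ 2 + (2 * (T ω * D ω) + D ω ^ 2) := fun ω => by
      simp only [hDdef]; ring
    have h2' : Integrable (fun ω => 2 * (T ω * D ω) + D ω ^ 2) μ :=
      (hTD.const_mul 2).add hDsq
    have h3' : Integrable (fun ω => 2 * (T ω * D ω)) μ := hTD.const_mul 2
    rw [integral_congr_ae (ae_of_all _ h), integral_add hTsq h2',
      integral_add h3' hDsq, integral_const_mul 2 _]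
  have hvar : variance Tt μ = variance T μ + ∫ ω, D ω ^ 2 ∂μ := by
    rw [variance_eq_sub hTt2, variance_eq_sub hT2]
    have hp1 : (Tt ^ 2 : Ω → ℝ) = fun ω => Tt ω ^ 2 := rfl
    have hp2 : (T ^ 2 : Ω → ℝ) = fun ω => T ω ^ 2 := rfl
    simp only [hp1, hp2]
    rw [eTt2, eTt1, hETD]
    ring
  rw [hvar]
  have : 0 ≤ ∫ ω, D ω ^ 2 ∂μ := integral_nonneg fun ω => sq_nonneg _
  linarith
end
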